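/- arXiv:1806.03022 — 4 statements merged into one kernel-verified Lean document; each statement's English description precedes it below -/
import Mathlib

section
/- Let n be a positive integer and let s be a complex number such that s + j ≠ 0 for j = 1, …, n. Then ∑_{k=0}^{n} (-1)^k · C(s+n, k) · (∑_{j=0}^{k-1} 1/(s+n-j)) = ((-1)^n / n) · C(s+n-1, n-1) · (1 + s · ∑_{j=1}^{n-1} 1/(s+j)). -/
/-- Generalized binomial coefficient `C(s,k) = s(s-1)⋯(s-k+1)/k!` for complex `s`. -/
noncomputable def genChoose (s : ℂ) (k : ℕ) : ℂ :=
  (∏ i ∈ Finset.range k, (s - i)) / (Nat.factorial k)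

/-- The `n`-th harmonic number as a complex number. -/
noncomputable def Hc (n : ℕ) : ℂ := ∑ i ∈ Finset.range n, 1 / (i + 1)

/-- The `n`-th generalized harmonic number of order 2 as a complex number. -/
noncomputable def H2c (n : ℕ) : ℂ := ∑ i ∈ Finset.range n, 1 / ((i : ℂ) + 1) ^ 2

/-!
Put `t = s + n`. Interchanging the two sums, each inner sum over `k` is a tail of the
alternating sum `∑_{k ≤ m} (-1)^k C(t,k) = (-1)^m C(t-1,m)`, and the absorption identity
`C(t-1,j) / (t-j) = C(t,j) / t` turns the correction terms into one more alternating sum.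
The left side becomes `(-1)^n (C(t-1,n) ∑_{j<n} 1/(t-j) + C(t-1,n-1)/t)`, and
`C(t-1,n) = C(t-1,n-1) s / n` turns this into the right side.
-/

open Finset Polynomial

theorem Ring.alternating_sum_range_choose_add_one {R : Type*} [CommRing R] [BinomialRing R]
    (r : R) (m : ℕ) :
    ∑ k ∈ range (m + 1), (-1) ^ k * Ring.choose (r + 1) k = (-1) ^ m * Ring.choose r m := by
  induction m with
  | zero => simp
  | succ m ih => rw [sum_range_succ, ih, Ring.choose_succ_succ]; ring

theorem genChoose_eq_choose (s : ℂ) (k : ℕ) : genChoose s k = Ring.choose s k := by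
  rw [Ring.choose_eq_smul, ← aeval_eq_smeval, aeval_def, eval₂_eq_eval_map, descPochhammer_map,
    descPochhammer_eval_eq_prod_range, genChoose, smul_eq_mul, div_eq_inv_mul]

theorem genChoose_succ (t : ℂ) (k : ℕ) :
    genChoose t (k + 1) = genChoose t k * (t - k) / (k + 1) := by
  rw [genChoose, genChoose, prod_range_succ, Nat.factorial_succ]
  push_cast
  field_simp

theorem mul_genChoose_sub_one (t : ℂ) (k : ℕ) :
    t * genChoose (t - 1) k = (t - k) * genChoose t k := by
  induction k with
  | zero => simp [genChoose]
  | succ k ih =>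
    rw [genChoose_succ, genChoose_succ, Nat.cast_succ]
    linear_combination (t - 1 - k) / (k + 1) * ih

theorem alternating_sum_range_genChoose (t : ℂ) (m : ℕ) :
    ∑ k ∈ range (m + 1), (-1) ^ k * genChoose t k = (-1) ^ m * genChoose (t - 1) m := by
  simpa [genChoose_eq_choose] using Ring.alternating_sum_range_choose_add_one (t - 1) m

theorem sum_range_one_div_add_sub_eq_sum_Icc (s : ℂ) (n : ℕ) :
    ∑ j ∈ range n, 1 / (s + n - j) = ∑ i ∈ Icc 1 n, 1 / (s + i) := by
  rw [range_eq_Ico, ← Ico_add_one_right_eq_Icc]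
  convert sum_Ico_reflect (fun i : ℕ => 1 / (s + i)) 0 (Nat.le_succ n) using 1
  · refine sum_congr rfl fun j hj => ?_
    rw [Nat.cast_sub (mem_Ico.1 hj).2.le, add_sub_assoc]
  · simp

theorem alternating_sum_genChoose_mul_sum_one_div (t : ℂ) (m : ℕ)
    (ht : ∀ j < m + 1, t - j ≠ 0) :
    ∑ k ∈ range (m + 2), (-1) ^ k * genChoose t k * ∑ j ∈ range k, 1 / (t - j) =
      (-1) ^ (m + 1) * (genChoose (t - 1) (m + 1) * ∑ j ∈ range (m + 1), 1 / (t - j)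
        + genChoose (t - 1) m / t) := by
  set A : ℕ → ℂ := fun i => (-1) ^ i * genChoose (t - 1) i
  have tail : ∀ j < m + 2,
      ∑ k ∈ Ico (j + 1) (m + 2), (-1) ^ k * genChoose t k = A (m + 1) - A j := by
    intro j hj
    rw [sum_Ico_eq_sub _ (by omega), alternating_sum_range_genChoose,
      alternating_sum_range_genChoose]
  have absorb : ∀ j < m + 1, A j / (t - j) = (-1) ^ j * genChoose t j / t := by
    intro j hj
    rw [div_eq_div_iff (ht j hj) (by simpa using ht 0 m.succ_pos)]
    linear_combination (-1) ^ j * mul_genChoose_sub_one t j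
  calc _ = ∑ j ∈ range (m + 2),
          (∑ k ∈ Ico (j + 1) (m + 2), (-1) ^ k * genChoose t k) / (t - j) := by
        simp_rw [mul_sum, sum_div, mul_one_div]
        exact sum_comm' fun k j => by simp only [mem_range, mem_Ico]; omega
    _ = ∑ j ∈ range (m + 1), (A (m + 1) - A j) / (t - j) := by
        rw [sum_range_succ, Ico_self, sum_empty, zero_div, add_zero]
        exact sum_congr rfl fun j hj => by rw [tail j (Nat.lt_succ_of_lt (mem_range.1 hj))]
    _ = A (m + 1) * ∑ j ∈ range (m + 1), 1 / (t - j)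
          - (∑ j ∈ range (m + 1), (-1) ^ j * genChoose t j) / t := by
        rw [mul_sum, sum_div, ← sum_sub_distrib]
        exact sum_congr rfl fun j hj => by rw [sub_div, absorb j (mem_range.1 hj)]; ring
    _ = _ := by rw [alternating_sum_range_genChoose]; ring

theorem stmt_2 (n : ℕ) (hn : 0 < n) (s : ℂ)
    (hs : ∀ j ∈ Finset.Icc 1 n, s + (j : ℂ) ≠ 0) :
    ∑ k ∈ Finset.range (n + 1), (-1 : ℂ) ^ k * genChoose (s + n) k *
        (∑ j ∈ Finset.range k, 1 / (s + n - j)) =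
      (-1 : ℂ) ^ n / n * genChoose (s + n - 1) (n - 1) *
        (1 + s * ∑ j ∈ Finset.Icc 1 (n - 1), 1 / (s + j)) := by
  obtain ⟨m, rfl⟩ : ∃ m, n = m + 1 := ⟨n - 1, by omega⟩
  have hsj : ∀ j < m + 1, s + ↑(m + 1) - j ≠ 0 := by
    intro j hj
    have := hs (m + 1 - j) (mem_Icc.2 ⟨by omega, by omega⟩)
    rwa [Nat.cast_sub hj.le, ← add_sub_assoc] at this
  have hsn : s + ↑(m + 1) ≠ 0 := hs (m + 1) (by simp)
  rw [alternating_sum_genChoose_mul_sum_one_div _ _ hsj, sum_range_one_div_add_sub_eq_sum_Icc,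
    sum_Icc_succ_top (by omega), genChoose_succ, Nat.add_sub_cancel]
  push_cast at hsn ⊢
  field_simp
  ring
end

section
/- For every positive integer n and every complex number s: ∑_{k=1}^{n} C(s+n, k) · (-1)^{k-1}/k = H_n + s · ∑_{k=0}^{n-1} (-1)^k · C(s+k, k) / ((k+1)^2 · binom(n, k+1)), where binom(n, k+1) is the ordinary binomial coefficient. -/
/-!
Induction on `n`, with `s` moving: since `s + (n + 1) = (s + 1) + n`, the left side at `(n + 1, s)`
is the left side at `(n, s + 1)` plus its top term, so it suffices that the right side obeys the
same recurrence. Comparing the two sums term by term, `C(n, k+1) (n+1) = C(n+1, k+1) (n-k)` and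
`(s+1) a_k(s+1) = (s+k+1) a_k(s)` for `a_k(s) = (-1)^k C(s+k, k)` turn the difference into the
telescoping sum of `a_k(s) / C(n, k) - a_{k+1}(s) / C(n, k+1)`.
-/

open Finset

theorem genChoose_succ_right_eq (s : ℂ) (k : ℕ) :
    genChoose s (k + 1) * (k + 1) = genChoose s k * (s - k) := by
  simp only [genChoose, prod_range_succ, Nat.factorial_succ, Nat.cast_mul, Nat.cast_succ]
  field_simp

theorem genChoose_add_one_succ (s : ℂ) (k : ℕ) :
    genChoose (s + 1) (k + 1) * (k + 1) = (s + 1) * genChoose s k := by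
  have hk : ((k : ℂ) + 1) ≠ 0 := Nat.cast_add_one_ne_zero k
  simp only [genChoose, prod_range_succ', Nat.factorial_succ, Nat.cast_mul, Nat.cast_succ,
    Nat.cast_zero, sub_zero, add_sub_add_right_eq_sub]
  field_simp

/-- Equals `C(-s-1, k)` by upper negation. -/
noncomputable def altChoose (s : ℂ) (k : ℕ) : ℂ := (-1) ^ k * genChoose (s + k) k

theorem altChoose_zero (s : ℂ) : altChoose s 0 = 1 := by
  simp [altChoose, genChoose]

theorem altChoose_succ (s : ℂ) (k : ℕ) :
    altChoose s (k + 1) * (k + 1) = -(s + k + 1) * altChoose s k := by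
  have h := genChoose_add_one_succ (s + k) k
  simp only [altChoose, pow_succ, Nat.cast_succ, ← add_assoc]
  linear_combination (-(-1 : ℂ) ^ k) * h

theorem add_one_mul_altChoose_add_one (s : ℂ) (k : ℕ) :
    (s + 1) * altChoose (s + 1) k = (s + k + 1) * altChoose s k := by
  have h₁ := genChoose_succ_right_eq (s + k + 1) k
  have h₂ := genChoose_add_one_succ (s + k) k
  have h : (s + 1) * genChoose (s + k + 1) k = (s + k + 1) * genChoose (s + k) k := by
    linear_combination h₂ - h₁
  simp only [altChoose, add_right_comm s 1]
  linear_combination (-1 : ℂ) ^ k * h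

theorem sum_range_altChoose_div_choose (n : ℕ) (s : ℂ) :
    ∑ k ∈ range n, (s + n + 1) * altChoose s k / ((k + 1) * n.choose (k + 1)) =
      1 - altChoose s n := by
  have step : ∀ k ∈ range n, (s + n + 1) * altChoose s k / ((k + 1) * n.choose (k + 1)) =
      altChoose s k / n.choose k - altChoose s (k + 1) / n.choose (k + 1) := by
    intro k hkn
    rw [mem_range] at hkn
    have hk : ((k : ℂ) + 1) ≠ 0 := Nat.cast_add_one_ne_zero k
    have hc₀ : (n.choose k : ℂ) ≠ 0 := by exact_mod_cast (Nat.choose_pos hkn.le).ne'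
    have hc₁ : (n.choose (k + 1) : ℂ) ≠ 0 := by exact_mod_cast (Nat.choose_pos hkn).ne'
    have hc : (n.choose (k + 1) : ℂ) * (k + 1) = n.choose k * (n - k) := by
      rw [← Nat.cast_sub hkn.le]; exact_mod_cast Nat.choose_succ_right_eq n k
    rw [div_sub_div _ _ hc₀ hc₁, div_eq_div_iff (mul_ne_zero hk hc₁) (mul_ne_zero hc₀ hc₁)]
    linear_combination (-altChoose s k * n.choose (k + 1)) * hc +
      (n.choose k * n.choose (k + 1) : ℂ) * altChoose_succ s k
  rw [sum_congr rfl step, sum_range_sub', altChoose_zero, Nat.choose_zero_right,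
    Nat.choose_self, Nat.cast_one, div_one, div_one]

noncomputable def altChooseSum (n : ℕ) (s : ℂ) : ℂ :=
  ∑ k ∈ range n, altChoose s k / (((k : ℂ) + 1) ^ 2 * n.choose (k + 1))

theorem altChooseSum_succ (n : ℕ) (s : ℂ) :
    s * altChooseSum (n + 1) s - (s + 1) * altChooseSum n (s + 1) =
      -(altChoose s (n + 1) + 1) / (n + 1) := by
  have hn : ((n : ℂ) + 1) ≠ 0 := Nat.cast_add_one_ne_zero n
  have term : ∀ k ∈ range n,
      s * (altChoose s k / (((k : ℂ) + 1) ^ 2 * (n + 1).choose (k + 1))) -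
        (s + 1) * (altChoose (s + 1) k / (((k : ℂ) + 1) ^ 2 * n.choose (k + 1))) =
      -((s + n + 1) * altChoose s k / ((k + 1) * n.choose (k + 1))) / (n + 1) := by
    intro k hkn
    rw [mem_range] at hkn
    have hk : ((k : ℂ) + 1) ≠ 0 := Nat.cast_add_one_ne_zero k
    have hc₀ : ((n + 1).choose (k + 1) : ℂ) ≠ 0 := by
      exact_mod_cast (Nat.choose_pos (by omega)).ne'
    have hc₁ : (n.choose (k + 1) : ℂ) ≠ 0 := by exact_mod_cast (Nat.choose_pos hkn).ne'
    have hc : (n.choose (k + 1) : ℂ) * (n + 1) = (n + 1).choose (k + 1) * (n - k) := by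
      have h := Nat.choose_mul_succ_eq n (k + 1)
      rw [Nat.add_sub_add_right] at h
      rw [← Nat.cast_sub hkn.le]; exact_mod_cast h
    rw [mul_div_assoc', mul_div_assoc', add_one_mul_altChoose_add_one,
      div_sub_div _ _ (by positivity) (by positivity), ← neg_div, div_div,
      div_eq_div_iff (by positivity) (by positivity)]
    linear_combination ((k : ℂ) + 1) ^ 3 * n.choose (k + 1) * altChoose s k * s * hc
  rw [altChooseSum, altChooseSum, sum_range_succ, mul_add, mul_sum, mul_sum, add_sub_right_comm,
    ← sum_sub_distrib, sum_congr rfl term, ← sum_div, sum_neg_distrib,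
    sum_range_altChoose_div_choose, Nat.choose_self, Nat.cast_one, mul_one]
  field_simp
  linear_combination altChoose_succ s n

theorem stmt_5_general (n : ℕ) (s : ℂ) :
    ∑ k ∈ Finset.Icc 1 n, genChoose (s + n) k * (-1 : ℂ) ^ (k - 1) / k =
      Hc n + s * ∑ k ∈ Finset.range n,
        (-1 : ℂ) ^ k * genChoose (s + k) k /
          (((k : ℂ) + 1) ^ 2 * (Nat.choose n (k + 1) : ℂ)) := by
  change _ = Hc n + s * altChooseSum n s
  induction n generalizing s with
  | zero => simp [Hc, altChooseSum]
  | succ n ih =>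
    have shift : s + ((n + 1 : ℕ) : ℂ) = s + 1 + n := by push_cast; ring
    have last := altChooseSum_succ n s
    rw [altChoose, shift] at last
    rw [sum_Icc_succ_top (by omega), shift, ih, Hc, Hc, sum_range_succ, add_tsub_cancel_right]
    push_cast
    linear_combination -last

theorem stmt_5 (n : ℕ) (hn : 0 < n) (s : ℂ) :
    ∑ k ∈ Finset.Icc 1 n, genChoose (s + n) k * (-1 : ℂ) ^ (k - 1) / k =
      Hc n + s * ∑ k ∈ Finset.range n,
        (-1 : ℂ) ^ k * genChoose (s + k) k /
          (((k : ℂ) + 1) ^ 2 * (Nat.choose n (k + 1) : ℂ)) :=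
  stmt_5_general n s
end

section
/- Let n be a positive integer and let s be a complex number such that s + j ≠ 0 for j = 1, …, n. Then ∑_{k=1}^{n} ((-1)^{k-1}/k) · C(s+n, k) · [ (∑_{j=0}^{k-1} 1/(s+n-j))^2 − ∑_{j=0}^{k-1} 1/(s+n-j)^2 ] = 2 · ∑_{k=0}^{n-1} ( (-1)^k · C(s+k, k) / ((k+1)^2 · binom(n, k+1)) ) · ∑_{j=1}^{k} 1/(s+j) + s · ∑_{k=0}^{n-1} ( (-1)^k · C(s+k, k) / ((k+1)^2 · binom(n, k+1)) ) · [ (∑_{j=1}^{k} 1/(s+j))^2 − ∑_{j=1}^{k} 1/(s+j)^2 ], where binom(n, k+1) is the ordinary binomial coefficient. -/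
/-!
Consider the polynomial identity
  `∑_{k=1}^n (-1)^(k-1)/k · C(X+n, k) = H_n + ∑_{k=1}^n (-1)^(k-1)/(k·C(n,k)) · C(X+k-1, k)`.
Both sides have degree at most `n`, so it suffices that they agree at `X = -m` for `m = 0, …, n`.
There the left side is `∑_k (-1)^(k-1)/k · C(n-m, k) = H_(n-m)`, and, since
`C(k-1-m, k) = (-1)^k C(m, k)`, the right side is `H_n - ∑_k C(m,k)/(k·C(n,k)) = H_(n-m)`, the last
sum being computed by induction on `m` with a telescoping step.

The theorem compares twice the coefficient of `t^2` in both sides at `X = s + t`. For a product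
`∏ (t + a_j)` with all `a_j ≠ 0`, twice that coefficient is `∏ a_j · ((∑ 1/a_j)^2 - ∑ 1/a_j^2)`,
which produces the brackets of the statement. On the right,
`C(s+t+k, k+1) = (s+t)/(k+1) · C(s+t+k, k)` splits the coefficient into the two sums.
-/

open Finset Polynomial Nat

lemma Hc_succ (n : ℕ) : Hc (n + 1) = Hc n + 1 / (n + 1) := sum_range_succ _ _

lemma prod_range_natCast_sub_eq_choose {R : Type*} [CommRing R] (a k : ℕ) :
    ∏ j ∈ range k, ((a : R) - j) = k ! * a.choose k := by
  rw [← descPochhammer_eval_eq_prod_range, descPochhammer_eval_eq_descFactorial,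
    Nat.descFactorial_eq_factorial_mul_choose, Nat.cast_mul]

lemma prod_range_sub_natCast_eq_choose {R : Type*} [CommRing R] (a k : ℕ) :
    ∏ j ∈ range k, ((j : R) - a) = (-1) ^ k * k ! * a.choose k := by
  have h : ∀ j ∈ range k, (j : R) - a = -1 * (a - j) := fun _ _ => by ring
  rw [prod_congr rfl h, prod_mul_distrib, prod_const, card_range, prod_range_natCast_sub_eq_choose,
    mul_assoc]

lemma sum_range_alternating_choose_succ (N : ℕ) :
    ∑ i ∈ range (N + 1), (-1 : ℂ) ^ i * (N + 1).choose (i + 1) = 1 := by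
  have h := congrArg (Int.cast : ℤ → ℂ) (Int.alternating_sum_range_choose_of_ne N.succ_ne_zero)
  push_cast at h
  rw [sum_range_succ'] at h
  simp only [pow_succ, mul_neg_one, neg_mul, sum_neg_distrib, pow_zero, Nat.choose_zero_right,
    Nat.cast_one, mul_one] at h
  linear_combination -h

lemma sum_alternating_choose_div_eq_Hc (N : ℕ) :
    ∑ i ∈ range N, (-1 : ℂ) ^ i * N.choose (i + 1) / (i + 1) = Hc N := by
  induction N with
  | zero => simp [Hc]
  | succ N ih =>
    have pascal : ∀ i ∈ range (N + 1), (-1 : ℂ) ^ i * (N + 1).choose (i + 1) / (i + 1) =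
        (-1 : ℂ) ^ i * (N + 1).choose (i + 1) / (N + 1) +
          (-1 : ℂ) ^ i * N.choose (i + 1) / (i + 1) := fun i _ => by
      have h := congrArg (Nat.cast : ℕ → ℂ) (Nat.add_one_mul_choose_eq N i)
      have h' := congrArg (Nat.cast : ℕ → ℂ) (Nat.choose_succ_succ' N i)
      push_cast at h h'
      field_simp
      linear_combination h + (N + 1 : ℂ) * h'
    rw [sum_congr rfl pascal, sum_add_distrib, ← sum_div, sum_range_alternating_choose_succ,
      sum_range_succ, Nat.choose_succ_self, ih, Hc_succ]
    simp only [one_div, CharP.cast_eq_zero, mul_zero, zero_div, add_zero]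
    ring

lemma choose_div_choose_telescope {m n i : ℕ} (hi : i ≤ m) (hm : m < n) :
    (m.choose i : ℂ) / ((i + 1) * n.choose (i + 1)) =
      ((m.choose i : ℂ) / n.choose i - (m.choose (i + 1) : ℂ) / n.choose (i + 1)) / (n - m) := by
  have hn : (n.choose i : ℂ) ≠ 0 := by exact_mod_cast (Nat.choose_pos (by omega)).ne'
  have hn' : (n.choose (i + 1) : ℂ) ≠ 0 := by exact_mod_cast (Nat.choose_pos (by omega)).ne'
  have hnm : (n : ℂ) - m ≠ 0 := sub_ne_zero.mpr (by exact_mod_cast hm.ne')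
  have hn_succ := congrArg (Nat.cast : ℕ → ℂ) (Nat.choose_succ_right_eq n i)
  have hm_succ := congrArg (Nat.cast : ℕ → ℂ) (Nat.choose_succ_right_eq m i)
  push_cast [Nat.cast_sub (hi.trans hm.le), Nat.cast_sub hi] at hn_succ hm_succ
  field_simp
  linear_combination -(m.choose i : ℂ) * hn_succ + n.choose i * hm_succ

lemma sum_choose_div_choose_succ {m n : ℕ} (hm : m < n) :
    ∑ i ∈ range (m + 1), (m.choose i : ℂ) / ((i + 1) * n.choose (i + 1)) = 1 / (n - m) := by
  rw [sum_congr rfl fun i hi => choose_div_choose_telescope (mem_range_succ_iff.mp hi) hm,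
    ← sum_div, sum_range_sub' (fun i => (m.choose i : ℂ) / n.choose i)]
  simp

lemma sum_choose_div_choose_eq_Hc_sub {m n : ℕ} (hm : m ≤ n) :
    ∑ i ∈ range m, (m.choose (i + 1) : ℂ) / ((i + 1) * n.choose (i + 1)) = Hc n - Hc (n - m) := by
  induction m with
  | zero => simp
  | succ m ih =>
    have hmn : m < n := hm
    simp only [Nat.choose_succ_succ', Nat.cast_add, add_div, sum_add_distrib]
    rw [sum_choose_div_choose_succ hmn, sum_range_succ _ m, Nat.choose_succ_self, ih hmn.le]
    obtain ⟨k, rfl⟩ := Nat.exists_eq_add_of_lt hmn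
    rw [show m + k + 1 - m = k + 1 by omega, show m + k + 1 - (m + 1) = k by omega,
      Hc_succ (m + k), Hc_succ k]
    push_cast
    ring

lemma sum_alternating_prod_natCast_sub {a n : ℕ} (ha : a ≤ n) :
    ∑ i ∈ range n, (-1 : ℂ) ^ i / ((i + 1) * (i + 1)!) * ∏ j ∈ range (i + 1), ((a : ℂ) - j) =
      Hc a := by
  rw [← sum_alternating_choose_div_eq_Hc, ← sum_subset (range_subset_range.mpr ha)]
  · refine sum_congr rfl fun i _ => ?_
    have := (i + 1).factorial_ne_zero
    rw [prod_range_natCast_sub_eq_choose]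
    field_simp
  · intro i _ hi
    rw [prod_range_natCast_sub_eq_choose, Nat.choose_eq_zero_of_lt (by simpa using hi)]
    simp

lemma sum_alternating_prod_sub_natCast {m n : ℕ} (hm : m ≤ n) :
    ∑ i ∈ range n, (-1 : ℂ) ^ i / ((i + 1) * (i + 1)! * n.choose (i + 1)) *
      ∏ j ∈ range (i + 1), ((j : ℂ) - m) = Hc (n - m) - Hc n := by
  rw [← neg_sub, ← sum_choose_div_choose_eq_Hc_sub hm, ← sum_subset (range_subset_range.mpr hm),
    ← sum_neg_distrib]
  · refine sum_congr rfl fun i _ => ?_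
    have := (i + 1).factorial_ne_zero
    rw [prod_range_sub_natCast_eq_choose]
    field_simp
    rw [← pow_add, Odd.neg_one_pow ⟨i, by ring⟩]
    ring
  · intro i _ hi
    rw [prod_range_sub_natCast_eq_choose, Nat.choose_eq_zero_of_lt (n := m) (by simpa using hi)]
    simp

lemma Polynomial.eq_of_natDegree_le_of_eval_neg_natCast_eq {R : Type*} [CommRing R] [IsDomain R]
    [CharZero R] {p q : R[X]} {n : ℕ} (hp : p.natDegree ≤ n) (hq : q.natDegree ≤ n)
    (h : ∀ m ≤ n, p.eval (-(m : R)) = q.eval (-(m : R))) : p = q := by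
  classical
  have hinj : Function.Injective fun m : ℕ => -(m : R) := fun a b hab => by simpa using hab
  refine eq_of_degree_sub_lt_of_eval_finset_eq ((range (n + 1)).image fun m : ℕ => -(m : R)) ?_ ?_
  · rw [card_image_of_injective _ hinj, card_range]
    exact (degree_le_of_natDegree_le ((natDegree_sub_le p q).trans (max_le hp hq))).trans_lt
      (by exact_mod_cast n.lt_succ_self)
  · simp only [mem_image, mem_range]
    rintro _ ⟨m, hm, rfl⟩
    exact h m (by omega)

section NewtonSum

variable {R : Type*} [CommRing R]

noncomputable def newtonSum (n : ℕ) (α c : ℕ → R) : R[X] :=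
  ∑ i ∈ range n, C (α i) * ∏ j ∈ range (i + 1), (X + C (c j))

lemma natDegree_newtonSum_le (n : ℕ) (α c : ℕ → R) : (newtonSum n α c).natDegree ≤ n := by
  refine natDegree_sum_le_of_forall_le _ _ fun i hi => (natDegree_C_mul_le _ _).trans ?_
  refine (natDegree_prod_le _ _).trans <| (sum_le_card_nsmul _ _ 1 fun j _ => ?_).trans ?_
  · exact (natDegree_add_le _ _).trans (max_le natDegree_X_le ((natDegree_C _).trans_le zero_le_one))
  · simpa using mem_range.mp hi

lemma eval_newtonSum (n : ℕ) (α c : ℕ → R) (x : R) :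
    (newtonSum n α c).eval x = ∑ i ∈ range n, α i * ∏ j ∈ range (i + 1), (x + c j) := by
  simp [newtonSum, eval_finsetSum, eval_prod]

lemma newtonSum_comp_X_add_C (n : ℕ) (α c : ℕ → R) (s : R) :
    (newtonSum n α c).comp (X + C s) = newtonSum n α fun j => s + c j := by
  simp [newtonSum, Polynomial.sum_comp, Polynomial.prod_comp, add_assoc]

lemma coeff_newtonSum (n : ℕ) (α c : ℕ → R) (k : ℕ) :
    (newtonSum n α c).coeff k =
      ∑ i ∈ range n, α i * (∏ j ∈ range (i + 1), (X + C (c j))).coeff k := by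
  simp [newtonSum, finsetSum_coeff]

end NewtonSum

lemma newtonSum_alternating_eq_Hc_add (n : ℕ) :
    newtonSum n (fun i => (-1 : ℂ) ^ i / ((i + 1) * (i + 1)!)) (fun j => n - j) =
      C (Hc n) + newtonSum n (fun i => (-1 : ℂ) ^ i / ((i + 1) * (i + 1)! * n.choose (i + 1)))
        (fun j => j) := by
  refine eq_of_natDegree_le_of_eval_neg_natCast_eq (natDegree_newtonSum_le _ _ _)
    ((natDegree_add_le _ _).trans (max_le (by simp) (natDegree_newtonSum_le _ _ _))) fun m hm => ?_
  have hshift : ∀ j : ℕ, -(m : ℂ) + (n - j) = ((n - m : ℕ) : ℂ) - j := fun j => by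
    push_cast [Nat.cast_sub hm]
    ring
  simp_rw [eval_add, eval_C, eval_newtonSum, hshift, neg_add_eq_sub,
    sum_alternating_prod_natCast_sub (n.sub_le m), sum_alternating_prod_sub_natCast hm]
  ring

lemma coeff_succ_X_add_C_mul {R : Type*} [Semiring R] (b : R) (p : R[X]) (k : ℕ) :
    ((X + C b) * p).coeff (k + 1) = p.coeff k + b * p.coeff (k + 1) := by
  rw [add_mul, coeff_add, coeff_X_mul, coeff_C_mul]

section ProdXAddC

variable {ι K : Type*} [Field K] (a : ι → K)

lemma coeff_one_prod_X_add_C {t : Finset ι} (h : ∀ i ∈ t, a i ≠ 0) :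
    (∏ i ∈ t, (X + C (a i))).coeff 1 = (∏ i ∈ t, a i) * ∑ i ∈ t, 1 / a i := by
  classical
  induction t using Finset.induction_on with
  | empty => simp [coeff_one]
  | insert b t hb ih =>
    have hab := h b (mem_insert_self b t)
    rw [prod_insert hb, prod_insert hb, sum_insert hb, coeff_succ_X_add_C_mul,
      coeff_zero_eq_eval_zero, eval_prod, ih fun i hi => h i (mem_insert_of_mem hi)]
    simp only [eval_add, eval_X, eval_C, zero_add]
    field_simp

lemma two_mul_coeff_two_prod_X_add_C {t : Finset ι} (h : ∀ i ∈ t, a i ≠ 0) :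
    2 * (∏ i ∈ t, (X + C (a i))).coeff 2 =
      (∏ i ∈ t, a i) * ((∑ i ∈ t, 1 / a i) ^ 2 - ∑ i ∈ t, 1 / a i ^ 2) := by
  classical
  induction t using Finset.induction_on with
  | empty => simp [coeff_one]
  | insert b t hb ih =>
    have ht : ∀ i ∈ t, a i ≠ 0 := fun i hi => h i (mem_insert_of_mem hi)
    rw [prod_insert hb, prod_insert hb, sum_insert hb, sum_insert hb, coeff_succ_X_add_C_mul,
      coeff_one_prod_X_add_C a ht]
    linear_combination a b * ih ht -
      2 * (∏ i ∈ t, a i) * (∑ i ∈ t, 1 / a i) * mul_inv_cancel₀ (h b (mem_insert_self b t))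

end ProdXAddC

lemma sum_Icc_one_eq_sum_range {M : Type*} [AddCommMonoid M] (f : ℕ → M) (n : ℕ) :
    ∑ k ∈ Icc 1 n, f k = ∑ i ∈ range n, f (i + 1) := by
  rw [range_eq_Ico, sum_Ico_add', ← Ico_add_one_right_eq_Icc]

lemma genChoose_add_self (s : ℂ) (k : ℕ) :
    genChoose (s + k) k = (∏ j ∈ range k, (s + ↑(j + 1))) / k ! := by
  rw [genChoose, ← prod_range_reflect]
  congr 1
  refine prod_congr rfl fun j hj => ?_
  have hj : j < k := mem_range.mp hj
  rw [Nat.cast_sub (by omega), Nat.cast_sub (by omega)]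
  push_cast
  ring

lemma two_mul_coeff_two_prod_range_X_add_C_sub {s : ℂ} {n k : ℕ} (hk : k ≤ n)
    (hs : ∀ j ∈ Icc 1 n, s + j ≠ 0) :
    2 * (∏ j ∈ range k, (X + C (s + n - j))).coeff 2 = k ! * genChoose (s + n) k *
      ((∑ j ∈ range k, 1 / (s + n - j)) ^ 2 - ∑ j ∈ range k, 1 / (s + n - j) ^ 2) := by
  have h : ∀ j ∈ range k, s + n - j ≠ 0 := fun j hj => by
    have hj : j < k := mem_range.mp hj
    have := hs (n - j) (mem_Icc.mpr ⟨by omega, by omega⟩)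
    rwa [Nat.cast_sub (by omega), ← add_sub_assoc] at this
  have := k.factorial_ne_zero
  rw [two_mul_coeff_two_prod_X_add_C _ h, genChoose]
  field_simp

lemma two_mul_coeff_two_prod_range_X_add_C_add {s : ℂ} {k : ℕ} (hs : ∀ j ∈ Icc 1 k, s + j ≠ 0) :
    2 * (∏ j ∈ range (k + 1), (X + C (s + j))).coeff 2 = k ! * genChoose (s + k) k *
      (2 * ∑ j ∈ Icc 1 k, 1 / (s + j) +
        s * ((∑ j ∈ Icc 1 k, 1 / (s + j)) ^ 2 - ∑ j ∈ Icc 1 k, 1 / (s + j) ^ 2)) := by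
  have h : ∀ j ∈ range k, s + ↑(j + 1) ≠ 0 := fun j hj =>
    hs _ (mem_Icc.mpr ⟨by omega, by simpa using hj⟩)
  have := k.factorial_ne_zero
  rw [prod_range_succ', mul_comm (∏ j ∈ range k, _), Nat.cast_zero, add_zero,
    coeff_succ_X_add_C_mul, mul_add, mul_left_comm, two_mul_coeff_two_prod_X_add_C _ h,
    coeff_one_prod_X_add_C _ h, genChoose_add_self, sum_Icc_one_eq_sum_range,
    sum_Icc_one_eq_sum_range]
  field_simp

theorem stmt_7_general (n : ℕ) (s : ℂ)
    (hs : ∀ j ∈ Finset.Icc 1 n, s + (j : ℂ) ≠ 0) :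
    ∑ k ∈ Finset.Icc 1 n, (-1 : ℂ) ^ (k - 1) / k * genChoose (s + n) k *
        ((∑ j ∈ Finset.range k, 1 / (s + n - j)) ^ 2 -
          ∑ j ∈ Finset.range k, 1 / (s + n - j) ^ 2) =
      2 * (∑ k ∈ Finset.range n, (-1 : ℂ) ^ k * genChoose (s + k) k /
          (((k : ℂ) + 1) ^ 2 * (Nat.choose n (k + 1) : ℂ)) *
          ∑ j ∈ Finset.Icc 1 k, 1 / (s + j)) +
        s * ∑ k ∈ Finset.range n, (-1 : ℂ) ^ k * genChoose (s + k) k /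
          (((k : ℂ) + 1) ^ 2 * (Nat.choose n (k + 1) : ℂ)) *
          ((∑ j ∈ Finset.Icc 1 k, 1 / (s + j)) ^ 2 -
            ∑ j ∈ Finset.Icc 1 k, 1 / (s + j) ^ 2) := by
  have h := congrArg (fun p => 2 * (p.comp (X + C s)).coeff 2) (newtonSum_alternating_eq_Hc_add n)
  simp only [add_comp, C_comp, coeff_add, coeff_C, two_ne_zero, if_false, zero_add,
    newtonSum_comp_X_add_C, coeff_newtonSum, mul_sum, ← add_sub_assoc] at h
  convert h using 1
  · rw [sum_Icc_one_eq_sum_range]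
    refine sum_congr rfl fun i hi => ?_
    have := (i + 1).factorial_ne_zero
    rw [mul_left_comm, two_mul_coeff_two_prod_range_X_add_C_sub (mem_range.mp hi) hs]
    push_cast
    field_simp
  · rw [mul_sum, mul_sum, ← sum_add_distrib]
    refine sum_congr rfl fun i hi => ?_
    have := i.factorial_ne_zero
    conv_rhs => rw [mul_left_comm, two_mul_coeff_two_prod_range_X_add_C_add fun j hj =>
      hs j (Icc_subset_Icc_right (mem_range.mp hi).le hj)]
    push_cast [Nat.factorial_succ]
    field_simp

theorem stmt_7 (n : ℕ) (hn : 0 < n) (s : ℂ)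
    (hs : ∀ j ∈ Finset.Icc 1 n, s + (j : ℂ) ≠ 0) :
    ∑ k ∈ Finset.Icc 1 n, (-1 : ℂ) ^ (k - 1) / k * genChoose (s + n) k *
        ((∑ j ∈ Finset.range k, 1 / (s + n - j)) ^ 2 -
          ∑ j ∈ Finset.range k, 1 / (s + n - j) ^ 2) =
      2 * (∑ k ∈ Finset.range n, (-1 : ℂ) ^ k * genChoose (s + k) k /
          (((k : ℂ) + 1) ^ 2 * (Nat.choose n (k + 1) : ℂ)) *
          ∑ j ∈ Finset.Icc 1 k, 1 / (s + j)) +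
        s * ∑ k ∈ Finset.range n, (-1 : ℂ) ^ k * genChoose (s + k) k /
          (((k : ℂ) + 1) ^ 2 * (Nat.choose n (k + 1) : ℂ)) *
          ((∑ j ∈ Finset.Icc 1 k, 1 / (s + j)) ^ 2 -
            ∑ j ∈ Finset.Icc 1 k, 1 / (s + j) ^ 2) :=
  stmt_7_general n s hs
end

section
/- For every positive integer n: ∑_{k=1}^{n} ((-1)^{k-1}/k) · binom(n, k) · H_{n−k} = H_n^2 + ∑_{k=1}^{n} (-1)^k / (k^2 · binom(n, k)), as an identity of rational numbers. -/
/-!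
Both sides vanish at `n = 0`, so it suffices to compare their increments from `n` to `n + 1`.
Through `(n + 1 - k) C(n + 1, k) = (n + 1) C(n, k)` both increments reduce to classical
alternating sums: `∑ (-1)^(k-1) C(n, k) / k = H_n`, `∑_{k=0}^{n} (-1)^k C(n, k) H_{n-k} =
(-1)^(n+1) / n` and the telescoping `∑ (-1)^k / (k C(n, k)) = ((-1)^n - 1) / (n + 1)`. The
increments then differ by exactly `H_{n+1}^2 - H_n^2 = 2 H_n / (n + 1) + 1 / (n + 1)^2`.
-/

/-- The `n`-th harmonic number as a rational number. -/
def Hq (n : ℕ) : ℚ := ∑ i ∈ Finset.range n, 1 / (i + 1)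

/-- The `n`-th generalized harmonic number of order 2 as a rational number. -/
def H2q (n : ℕ) : ℚ := ∑ i ∈ Finset.range n, 1 / ((i : ℚ) + 1) ^ 2

open Finset

lemma Hq_succ (n : ℕ) : Hq (n + 1) = Hq n + 1 / (n + 1) := by
  simp [Hq, sum_range_succ]

lemma Hq_sub_succ {n k : ℕ} (hk : k ≤ n) :
    Hq (n + 1 - k) = Hq (n - k) + 1 / ((n : ℚ) + 1 - k) := by
  rw [Nat.sub_add_comm hk, Hq_succ, Nat.cast_sub hk]
  ring

lemma sum_range_succ_eq_add_sum_Icc {M : Type*} [AddCommMonoid M] (f : ℕ → M) (n : ℕ) :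
    ∑ k ∈ range (n + 1), f k = f 0 + ∑ k ∈ Icc 1 n, f k := by
  rw [Nat.range_succ_eq_Icc_zero, Icc_eq_cons_Ioc n.zero_le, sum_cons, ← Icc_add_one_left_eq_Ioc,
    zero_add]

namespace Nat

variable {R : Type*} [CommRing R]

lemma neg_one_pow_sub_one {k : ℕ} (hk : k ≠ 0) : (-1 : R) ^ (k - 1) = -(-1) ^ k := by
  obtain ⟨j, rfl⟩ := exists_eq_succ_of_ne_zero hk
  simp [pow_succ]

lemma cast_add_one_sub_mul_choose_succ (n k : ℕ) :
    ((n : R) + 1 - k) * (n + 1).choose k = (n + 1) * n.choose k := by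
  rcases le_or_gt k (n + 1) with hk | hk
  · have := congrArg (Nat.cast : ℕ → R) (choose_mul_succ_eq n k)
    push_cast [Nat.cast_sub hk] at this
    linear_combination -this
  · simp [choose_eq_zero_of_lt hk, choose_eq_zero_of_lt (Nat.lt_of_succ_lt hk)]

lemma cast_add_one_mul_choose_succ_right (n k : ℕ) :
    ((k : R) + 1) * n.choose (k + 1) = (n - k) * n.choose k := by
  rcases le_or_gt k n with hk | hk
  · have := congrArg (Nat.cast : ℕ → R) (choose_succ_right_eq n k)
    push_cast [Nat.cast_sub hk] at this
    linear_combination this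
  · simp [choose_eq_zero_of_lt hk, choose_eq_zero_of_lt (Nat.lt_succ_of_lt hk)]

lemma cast_sum_Icc_neg_one_pow_sub_one_mul_choose_succ (n m : ℕ) :
    ∑ k ∈ Icc 1 m, (-1 : R) ^ (k - 1) * (n + 1).choose k = 1 - (-1) ^ m * n.choose m := by
  have := congrArg (Int.cast : ℤ → R)
    (Int.alternating_sum_range_choose_eq_choose (n := n) (m := m))
  push_cast [sum_range_succ_eq_add_sum_Icc] at this
  have hsign : ∀ k ∈ Icc 1 m,
      (-1 : R) ^ (k - 1) * (n + 1).choose k = -((-1) ^ k * (n + 1).choose k) := by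
    intro k hk
    rw [neg_one_pow_sub_one (by grind)]
    ring
  rw [sum_congr rfl hsign, sum_neg_distrib]
  simp only [choose_zero_right, cast_one, mul_one] at this
  linear_combination -this

end Nat

section ChooseField

variable {K : Type*} [Field K] [CharZero K]

lemma Nat.cast_choose_div_add_one_sub {n k : ℕ} (hk : k ≤ n) :
    (n.choose k : K) / ((n : K) + 1 - k) = (n + 1).choose k / ((n : K) + 1) := by
  have hk' : (n : K) + 1 - k ≠ 0 := by
    rw [sub_ne_zero]; norm_cast; omega
  rw [div_eq_div_iff hk' n.cast_add_one_ne_zero]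
  linear_combination (Nat.cast_add_one_sub_mul_choose_succ n k (R := K)).symm

lemma Nat.cast_choose_succ_div {n k : ℕ} (hk : k ≠ 0) :
    ((n + 1).choose k : K) / k = n.choose k / k + (n + 1).choose k / ((n : K) + 1) := by
  have := Nat.cast_add_one_sub_mul_choose_succ n k (R := K)
  field_simp
  linear_combination this

end ChooseField

lemma sum_Icc_neg_one_pow_sub_one_mul_choose_div (n : ℕ) :
    ∑ k ∈ Icc 1 n, (-1 : ℚ) ^ (k - 1) * n.choose k / k = Hq n := by
  induction n with
  | zero => simp [Hq]
  | succ n ih =>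
    calc ∑ k ∈ Icc 1 (n + 1), (-1 : ℚ) ^ (k - 1) * (n + 1).choose k / k
      _ = ∑ k ∈ Icc 1 (n + 1), ((-1 : ℚ) ^ (k - 1) * n.choose k / k
            + (-1) ^ (k - 1) * (n + 1).choose k / ((n : ℚ) + 1)) := by
        refine sum_congr rfl fun k hk => ?_
        rw [mul_div_assoc, Nat.cast_choose_succ_div (by grind)]
        ring
      _ = ∑ k ∈ Icc 1 n, (-1 : ℚ) ^ (k - 1) * n.choose k / k
            + (∑ k ∈ Icc 1 (n + 1), (-1 : ℚ) ^ (k - 1) * (n + 1).choose k) / (n + 1) := by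
        rw [sum_add_distrib, ← sum_div, sum_Icc_succ_top (by omega)]
        simp
      _ = Hq (n + 1) := by
        rw [ih, Nat.cast_sum_Icc_neg_one_pow_sub_one_mul_choose_succ, Hq_succ]
        simp

lemma sum_range_neg_one_pow_mul_choose_mul_Hq_sub (n : ℕ) :
    ∑ i ∈ range (n + 2), (-1 : ℚ) ^ i * (n + 1).choose i * Hq (n + 1 - i) =
      (-1) ^ n / (n + 1) := by
  have hpascal := sum_choose_succ_mul (fun i j => (-1 : ℚ) ^ i * Hq j) n
  have halt := congrArg (Int.cast : ℤ → ℚ)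
    (Int.alternating_sum_range_choose_eq_choose (n := n) (m := n))
  push_cast at halt
  calc ∑ i ∈ range (n + 2), (-1 : ℚ) ^ i * (n + 1).choose i * Hq (n + 1 - i)
      = ∑ i ∈ range (n + 1), (n.choose i : ℚ) * ((-1) ^ i * Hq (n + 1 - i))
          + ∑ i ∈ range (n + 1), (n.choose i : ℚ) * ((-1) ^ (i + 1) * Hq (n - i)) := by
        rw [← hpascal]
        exact sum_congr rfl fun i _ => by ring
    -- the two sums from Pascal's rule differ only in `H_{n+1-i} - H_{n-i} = 1 / (n + 1 - i)`
    _ = ∑ i ∈ range (n + 1), (-1 : ℚ) ^ i * (n + 1).choose i / (n + 1) := by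
        rw [← sum_add_distrib]
        refine sum_congr rfl fun i hi => ?_
        rw [Hq_sub_succ (by grind), mul_div_assoc, ← Nat.cast_choose_div_add_one_sub (by grind)]
        ring
    _ = (-1) ^ n / (n + 1) := by
        rw [← sum_div, halt]
        simp

lemma sum_Icc_neg_one_pow_sub_one_mul_choose_mul_Hq_sub (n : ℕ) :
    ∑ k ∈ Icc 1 (n + 1), (-1 : ℚ) ^ (k - 1) * (n + 1).choose k * Hq (n + 1 - k) =
      Hq (n + 1) - (-1) ^ n / (n + 1) := by
  have h := sum_range_neg_one_pow_mul_choose_mul_Hq_sub n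
  rw [sum_range_succ_eq_add_sum_Icc] at h
  have hsign : ∀ k ∈ Icc 1 (n + 1), (-1 : ℚ) ^ (k - 1) * (n + 1).choose k * Hq (n + 1 - k) =
      -((-1) ^ k * (n + 1).choose k * Hq (n + 1 - k)) := by
    intro k hk
    rw [Nat.neg_one_pow_sub_one (by grind)]
    ring
  rw [sum_congr rfl hsign, sum_neg_distrib]
  simp only [pow_zero, Nat.choose_zero_right, Nat.cast_one, one_mul, Nat.sub_zero] at h
  linear_combination -h

lemma sum_Icc_neg_one_pow_div_mul_choose {n m : ℕ} (hm : m ≤ n) :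
    ∑ k ∈ Icc 1 m, (-1 : ℚ) ^ k / (k * n.choose k) =
      ((-1) ^ m / n.choose m - 1) / (n + 1) := by
  induction m with
  | zero => simp
  | succ m ih =>
    rw [sum_Icc_succ_top (by omega), ih (by omega)]
    have hm0 : (n.choose m : ℚ) ≠ 0 := Nat.cast_ne_zero.mpr (Nat.choose_pos (by omega)).ne'
    have hm1 : (n.choose (m + 1) : ℚ) ≠ 0 := Nat.cast_ne_zero.mpr (Nat.choose_pos hm).ne'
    have := Nat.cast_add_one_mul_choose_succ_right n m (R := ℚ)
    push_cast
    field_simp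
    linear_combination (-1) ^ m * this

def harmonicBinomialSum (n : ℕ) : ℚ :=
  ∑ k ∈ Icc 1 n, (-1 : ℚ) ^ (k - 1) / k * n.choose k * Hq (n - k)

def inverseChooseSqSum (n : ℕ) : ℚ :=
  ∑ k ∈ Icc 1 n, (-1 : ℚ) ^ k / ((k : ℚ) ^ 2 * n.choose k)

lemma inverseChooseSqSum_succ (n : ℕ) :
    inverseChooseSqSum (n + 1) =
      inverseChooseSqSum n + (1 + 2 * (-1) ^ (n + 1)) / ((n : ℚ) + 1) ^ 2 := by
  have hterm : ∀ k ∈ Icc 1 n, (-1 : ℚ) ^ k / ((k : ℚ) ^ 2 * (n + 1).choose k) =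
      (-1) ^ k / ((k : ℚ) ^ 2 * n.choose k) - (-1) ^ k / (k * n.choose k) / (n + 1) := by
    intro k hk
    have hk0 : (k : ℚ) ≠ 0 := Nat.cast_ne_zero.mpr (by grind)
    have hc : (n.choose k : ℚ) ≠ 0 := Nat.cast_ne_zero.mpr (Nat.choose_pos (by grind)).ne'
    have hc' : ((n + 1).choose k : ℚ) ≠ 0 :=
      Nat.cast_ne_zero.mpr (Nat.choose_pos (by grind)).ne'
    have := Nat.cast_add_one_sub_mul_choose_succ n k (R := ℚ)
    field_simp
    linear_combination -this
  rw [inverseChooseSqSum, sum_Icc_succ_top (by omega), sum_congr rfl hterm, sum_sub_distrib,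
    ← sum_div, sum_Icc_neg_one_pow_div_mul_choose le_rfl, inverseChooseSqSum]
  simp only [Nat.choose_self, Nat.cast_one, div_one, Nat.cast_add, mul_one]
  field_simp
  ring

lemma harmonicBinomialSum_succ (n : ℕ) :
    harmonicBinomialSum (n + 1) =
      harmonicBinomialSum n + 2 * Hq n / (n + 1) +
        2 * (1 + (-1) ^ (n + 1)) / ((n : ℚ) + 1) ^ 2 := by
  have hsplit : ∀ k ∈ Icc 1 (n + 1),
      (-1 : ℚ) ^ (k - 1) / k * (n + 1).choose k * Hq (n + 1 - k) =
        (-1) ^ (k - 1) / k * n.choose k * Hq (n + 1 - k) +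
          (-1) ^ (k - 1) * (n + 1).choose k * Hq (n + 1 - k) / (n + 1) := by
    intro k hk
    calc (-1 : ℚ) ^ (k - 1) / k * (n + 1).choose k * Hq (n + 1 - k)
        = (-1) ^ (k - 1) * ((n + 1).choose k / k) * Hq (n + 1 - k) := by ring
      _ = _ := by rw [Nat.cast_choose_succ_div (by grind)]; ring
  have hshift : ∀ k ∈ Icc 1 n,
      (-1 : ℚ) ^ (k - 1) / k * n.choose k * Hq (n + 1 - k) =
        (-1) ^ (k - 1) / k * n.choose k * Hq (n - k) +
          ((-1) ^ (k - 1) * n.choose k / k +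
            (-1) ^ (k - 1) * (n + 1).choose k / (n + 1)) / (n + 1) := by
    intro k hk
    have hk0 : (k : ℚ) ≠ 0 := Nat.cast_ne_zero.mpr (by grind)
    have hnk : (n : ℚ) + 1 - k ≠ 0 := by
      rw [sub_ne_zero]; norm_cast; grind
    have hC : ((n + 1).choose k : ℚ) = (n + 1) * n.choose k / (n + 1 - k) := by
      rw [eq_div_iff hnk]
      linear_combination Nat.cast_add_one_sub_mul_choose_succ n k (R := ℚ)
    rw [Hq_sub_succ (by grind), hC]
    field_simp
    ring
  rw [harmonicBinomialSum, sum_congr rfl hsplit, sum_add_distrib, ← sum_div,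
    sum_Icc_neg_one_pow_sub_one_mul_choose_mul_Hq_sub, sum_Icc_succ_top (by omega)]
  simp only [Nat.choose_succ_self, Nat.cast_zero, mul_zero, zero_mul, add_zero]
  rw [sum_congr rfl hshift, sum_add_distrib, ← sum_div, sum_add_distrib, ← sum_div,
    sum_Icc_neg_one_pow_sub_one_mul_choose_div,
    Nat.cast_sum_Icc_neg_one_pow_sub_one_mul_choose_succ, harmonicBinomialSum, Hq_succ]
  simp only [Nat.choose_self, Nat.cast_one, mul_one, one_div]
  field_simp
  ring

theorem stmt_13_general (n : ℕ) :
    ∑ k ∈ Finset.Icc 1 n, (-1 : ℚ) ^ (k - 1) / k * (Nat.choose n k : ℚ) * Hq (n - k) =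
      Hq n ^ 2 + ∑ k ∈ Finset.Icc 1 n,
        (-1 : ℚ) ^ k / ((k : ℚ) ^ 2 * (Nat.choose n k : ℚ)) := by
  change harmonicBinomialSum n = Hq n ^ 2 + inverseChooseSqSum n
  induction n with
  | zero => simp [harmonicBinomialSum, inverseChooseSqSum, Hq]
  | succ n ih =>
    rw [harmonicBinomialSum_succ, inverseChooseSqSum_succ, ih, Hq_succ]
    field_simp
    ring

theorem stmt_13 (n : ℕ) (hn : 0 < n) :
    ∑ k ∈ Finset.Icc 1 n, (-1 : ℚ) ^ (k - 1) / k * (Nat.choose n k : ℚ) * Hq (n - k) =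
      Hq n ^ 2 + ∑ k ∈ Finset.Icc 1 n,
        (-1 : ℚ) ^ k / ((k : ℚ) ^ 2 * (Nat.choose n k : ℚ)) :=
  stmt_13_general n
end
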